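/- Let Hi denote the Scorer function Hi(z) = (1/π) ∫₀^∞ exp(zy − y³/3) dy and, for ν > 0 and x > 0, let A_{−ν}(x) = (1/π) ∫₀^∞ exp(νy − x · sinh y) dy denote the associated Anger–Weber function. Then for every fixed a ∈ ℝ, lim_{ν→∞} ν^{1/3} · A_{−ν}(ν + a·ν^{1/3}) = 2^{1/3} · Hi(−2^{1/3} · a), the limit being taken over real ν → +∞. -/

import Mathlib

open Real Filter MeasureTheory

/-- The Scorer function `Hi`, defined by the absolutely convergent integral
`Hi z = (1/π) ∫₀^∞ exp (z y - y³/3) dy`. -/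
noncomputable def scorerHi (z : ℝ) : ℝ :=
  (1 / π) * ∫ y in Set.Ioi (0:ℝ), Real.exp (z * y - y ^ 3 / 3)

/-- The associated Anger–Weber function `A_{-ν}(x) = (1/π) ∫₀^∞ exp (ν y - x sinh y) dy`. -/
noncomputable def angerWeberA (ν x : ℝ) : ℝ :=
  (1 / π) * ∫ y in Set.Ioi (0:ℝ), Real.exp (ν * y - x * Real.sinh y)

/-!
Put `ν = s³` and substitute `y = t / s`: then `s · A_{-s³}(s³ + a s)` becomes
`(1/π) ∫₀^∞ exp (-(1 + a/s²) t³ q(t/s) - a t) dt` with `q u = (sinh u - u) / u³`.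
The Maclaurin series of `sinh` and `cosh` squeeze `q u` between `1/6` and `cosh u / 6`, so
`q (t/s) → 1/6`, and once `s² ≥ 2|a|` the integrand is dominated by `exp (|a| t - t³/12)`.
Dominated convergence gives `(1/π) ∫₀^∞ exp (-t³/6 - a t) dt`, which is `2^{1/3} Hi(-2^{1/3} a)`
after the substitution `y = 2^{-1/3} t`.
-/

open Set
open scoped Nat Topology

namespace Real

theorem add_cube_div_six_le_sinh {u : ℝ} (hu : 0 ≤ u) : u + u ^ 3 / 6 ≤ sinh u := by
  have h := sum_le_hasSum (Finset.range 2) (fun n _ => by positivity) (hasSum_sinh u)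
  norm_num [Finset.sum_range_succ, Nat.factorial] at h
  linarith

theorem sinh_le_add_cube_div_six_mul_cosh {u : ℝ} (hu : 0 ≤ u) :
    sinh u ≤ u + u ^ 3 / 6 * cosh u := by
  have hterm (n : ℕ) : u ^ (2 * (n + 1) + 1) / ((2 * (n + 1) + 1)! : ℝ)
      ≤ u ^ 3 / 6 * (u ^ (2 * n) / (2 * n)!) := by
    have hfact : (2 * n)! * 3! ≤ (2 * (n + 1) + 1)! :=
      Nat.le_of_dvd (Nat.factorial_pos _) (Nat.factorial_mul_factorial_dvd_factorial_add _ _)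
    calc u ^ (2 * (n + 1) + 1) / ((2 * (n + 1) + 1)! : ℝ)
        = u ^ 3 * u ^ (2 * n) / (2 * (n + 1) + 1)! := by ring
      _ ≤ u ^ 3 * u ^ (2 * n) / ((2 * n)! * 3!) :=
          div_le_div_of_nonneg_left (by positivity) (by positivity) (mod_cast hfact)
      _ = u ^ 3 / 6 * (u ^ (2 * n) / (2 * n)!) := by
          rw [show (3! : ℝ) = 6 by norm_num [Nat.factorial]]; ring
  have h := hasSum_le hterm ((hasSum_nat_add_iff' 1).mpr (hasSum_sinh u))
    ((hasSum_cosh u).mul_left (u ^ 3 / 6))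
  simp only [Finset.range_one, Finset.sum_singleton, mul_zero, zero_add, pow_one,
    Nat.factorial_one, Nat.cast_one, div_one, tsub_le_iff_right] at h
  linarith

end Real

noncomputable def sinhRemainderRatio (u : ℝ) : ℝ := (sinh u - u) / u ^ 3

theorem one_sixth_le_sinhRemainderRatio {u : ℝ} (hu : 0 < u) :
    1 / 6 ≤ sinhRemainderRatio u := by
  rw [sinhRemainderRatio, le_div_iff₀ (by positivity)]
  linarith [add_cube_div_six_le_sinh hu.le]

theorem sinhRemainderRatio_le_cosh_div_six {u : ℝ} (hu : 0 < u) :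
    sinhRemainderRatio u ≤ cosh u / 6 := by
  rw [sinhRemainderRatio, div_le_iff₀ (by positivity)]
  linarith [sinh_le_add_cube_div_six_mul_cosh hu.le]

theorem tendsto_sinhRemainderRatio : Tendsto sinhRemainderRatio (𝓝[>] 0) (𝓝 (1 / 6)) := by
  have hcosh : Tendsto (fun u => cosh u / 6) (𝓝[>] 0) (𝓝 (1 / 6)) := by
    simpa using (continuous_cosh.tendsto 0).div_const 6 |>.mono_left nhdsWithin_le_nhds
  refine tendsto_of_tendsto_of_tendsto_of_le_of_le' tendsto_const_nhds hcosh ?_ ?_ <;>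
    filter_upwards [self_mem_nhdsWithin] with u hu
  exacts [one_sixth_le_sinhRemainderRatio hu, sinhRemainderRatio_le_cosh_div_six hu]

theorem mul_integral_Ioi_zero_eq_integral_div (g : ℝ → ℝ) {c : ℝ} (hc : 0 < c) :
    c * ∫ y in Ioi 0, g y = ∫ t in Ioi 0, g (t / c) := by
  simpa [div_eq_inv_mul] using (integral_comp_mul_left_Ioi g 0 (inv_pos.mpr hc)).symm

theorem cube_mul_sub_mul_sinh_eq (a : ℝ) {s t : ℝ} (hs : s ≠ 0) (ht : t ≠ 0) :
    s ^ 3 * (t / s) - (s ^ 3 + a * s) * sinh (t / s)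
      = -((1 + a / s ^ 2) * t ^ 3 * sinhRemainderRatio (t / s)) - a * t := by
  rw [sinhRemainderRatio]
  field_simp
  ring

theorem mul_angerWeberA_cube (a : ℝ) {s : ℝ} (hs : 0 < s) :
    s * angerWeberA (s ^ 3) (s ^ 3 + a * s) = (1 / π) *
      ∫ t in Ioi 0, exp (-((1 + a / s ^ 2) * t ^ 3 * sinhRemainderRatio (t / s)) - a * t) := by
  rw [angerWeberA, mul_left_comm, mul_integral_Ioi_zero_eq_integral_div _ hs]
  congr 1
  refine setIntegral_congr_fun measurableSet_Ioi fun t ht => ?_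
  rw [cube_mul_sub_mul_sinh_eq a hs.ne' (ne_of_gt ht)]

theorem two_rpow_mul_scorerHi (a : ℝ) :
    (2:ℝ) ^ ((1:ℝ)/3) * scorerHi (-((2:ℝ) ^ ((1:ℝ)/3)) * a)
      = (1 / π) * ∫ t in Ioi 0, exp (-(t ^ 3 / 6) - a * t) := by
  set c : ℝ := 2 ^ ((1:ℝ)/3)
  have hc : 0 < c := by positivity
  have hc3 : c ^ 3 = 2 := by
    rw [← rpow_natCast, ← rpow_mul zero_le_two]; norm_num
  rw [scorerHi, mul_left_comm, mul_integral_Ioi_zero_eq_integral_div _ hc]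
  congr 2 with t
  congr 1
  field_simp
  rw [hc3]
  ring

theorem integrableOn_exp_mul_sub_cube (c : ℝ) {b : ℝ} (hb : 0 < b) :
    IntegrableOn (fun t => exp (c * t - b * t ^ 3)) (Ioi 0) := by
  refine integrable_of_isBigO_exp_neg one_pos (by fun_prop) ?_
  refine isBigO_exp_comp_exp_comp.mpr (isBoundedUnder_of_eventually_le (a := 0) ?_)
  filter_upwards [eventually_ge_atTop (max 1 (|c + 1| / b))] with t ht
  have ht1 : 1 ≤ t := le_of_max_le_left ht
  have hbt : c + 1 ≤ b * t :=
    (le_abs_self _).trans ((div_le_iff₀' hb).mp (le_of_max_le_right ht))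
  have : (c + 1) * t ≤ b * t ^ 3 :=
    calc (c + 1) * t ≤ b * t * t := by gcongr
      _ ≤ b * t * t ^ 2 := by gcongr; nlinarith
      _ = b * t ^ 3 := by ring
  simp only [Pi.sub_apply]
  linarith

theorem neg_mul_sinhRemainderRatio_sub_le {a s t : ℝ} (hs : 0 < s) (hs2 : 2 * |a| ≤ s ^ 2)
    (ht : 0 < t) :
    -((1 + a / s ^ 2) * t ^ 3 * sinhRemainderRatio (t / s)) - a * t
      ≤ |a| * t - 1 / 12 * t ^ 3 := by
  have hq := one_sixth_le_sinhRemainderRatio (div_pos ht hs)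
  have hfactor : 1 / 2 ≤ 1 + a / s ^ 2 := by
    have : -(1 / 2) ≤ a / s ^ 2 := by
      rw [le_div_iff₀ (by positivity)]
      linarith [neg_abs_le a]
    linarith
  have hcubic : 1 / 12 * t ^ 3 ≤ (1 + a / s ^ 2) * t ^ 3 * sinhRemainderRatio (t / s) :=
    calc 1 / 12 * t ^ 3 = 1 / 2 * t ^ 3 * (1 / 6) := by ring
      _ ≤ _ := by gcongr
  have hlinear : -a * t ≤ |a| * t := by gcongr; exact neg_le_abs a
  linarith

theorem tendsto_exp_neg_mul_sinhRemainderRatio (a : ℝ) {t : ℝ} (ht : 0 < t) :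
    Tendsto (fun s => exp (-((1 + a / s ^ 2) * t ^ 3 * sinhRemainderRatio (t / s)) - a * t))
      atTop (𝓝 (exp (-(t ^ 3 / 6) - a * t))) := by
  have hu : Tendsto (fun s => t / s) atTop (𝓝[>] 0) :=
    tendsto_nhdsWithin_iff.mpr ⟨tendsto_const_nhds.div_atTop tendsto_id,
      (eventually_gt_atTop 0).mono fun s hs => div_pos ht hs⟩
  have ha : Tendsto (fun s : ℝ => a / s ^ 2) atTop (𝓝 0) :=
    tendsto_const_nhds.div_atTop (tendsto_pow_atTop two_ne_zero)
  have h := ((((ha.const_add 1).mul_const (t ^ 3)).mul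
    (tendsto_sinhRemainderRatio.comp hu)).neg.sub_const (a * t)).rexp
  rwa [show -((1 + 0) * t ^ 3 * (1 / 6)) - a * t = -(t ^ 3 / 6) - a * t by ring] at h

theorem tendsto_integral_exp_sinhRemainderRatio (a : ℝ) :
    Tendsto (fun s => ∫ t in Ioi 0,
        exp (-((1 + a / s ^ 2) * t ^ 3 * sinhRemainderRatio (t / s)) - a * t))
      atTop (𝓝 (∫ t in Ioi 0, exp (-(t ^ 3 / 6) - a * t))) := by
  refine tendsto_integral_filter_of_dominated_convergence
    (fun t => exp (|a| * t - 1 / 12 * t ^ 3)) ?_ ?_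
    (integrableOn_exp_mul_sub_cube |a| (by norm_num)) ?_
  · refine Eventually.of_forall fun s => Measurable.aestronglyMeasurable ?_
    unfold sinhRemainderRatio
    fun_prop
  · filter_upwards [eventually_gt_atTop 0,
      (tendsto_pow_atTop two_ne_zero).eventually_ge_atTop (2 * |a|)] with s hs hs2
    refine (ae_restrict_iff' measurableSet_Ioi).mpr (ae_of_all _ fun t ht => ?_)
    rw [norm_eq_abs, abs_exp, exp_le_exp]
    exact neg_mul_sinhRemainderRatio_sub_le hs hs2 ht
  · exact (ae_restrict_iff' measurableSet_Ioi).mpr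
      (ae_of_all _ fun t ht => tendsto_exp_neg_mul_sinhRemainderRatio a ht)

/-- For every fixed `a : ℝ`,
`ν^(1/3) * A_{-ν}(ν + a ν^(1/3)) → 2^(1/3) Hi (-2^(1/3) a)` as real `ν → +∞`. -/
theorem angerWeber_scorer_limit (a : ℝ) :
    Tendsto (fun ν : ℝ =>
        ν ^ ((1:ℝ)/3) * angerWeberA ν (ν + a * ν ^ ((1:ℝ)/3)))
      atTop (nhds ((2:ℝ) ^ ((1:ℝ)/3) * scorerHi (-((2:ℝ) ^ ((1:ℝ)/3)) * a))) := by
  have hcube : (fun s => s * angerWeberA (s ^ 3) (s ^ 3 + a * s)) ∘ (fun ν => ν ^ ((1:ℝ)/3))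
      =ᶠ[atTop] fun ν => ν ^ ((1:ℝ)/3) * angerWeberA ν (ν + a * ν ^ ((1:ℝ)/3)) := by
    filter_upwards [eventually_ge_atTop 0] with ν hν
    simp only [Function.comp_apply, ← rpow_natCast, ← rpow_mul hν]
    norm_num
  have hscaled : Tendsto (fun s => s * angerWeberA (s ^ 3) (s ^ 3 + a * s)) atTop
      (𝓝 ((1 / π) * ∫ t in Ioi 0, exp (-(t ^ 3 / 6) - a * t))) := by
    refine ((tendsto_integral_exp_sinhRemainderRatio a).const_mul (1 / π)).congr' ?_
    filter_upwards [eventually_gt_atTop 0] with s hs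
    exact (mul_angerWeberA_cube a hs).symm
  rw [two_rpow_mul_scorerHi]
  exact (hscaled.comp (tendsto_rpow_atTop (by norm_num))).congr' hcube
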